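/- arXiv:1702.02630 — 3 statements merged into one kernel-verified Lean document; each statement's English description precedes it below -/
import Mathlib

section
/- Let X be a continuum with at least two points. Then no nonempty open subset U of X is zero-dimensional; that is, the subspace U does not have a topological basis consisting of sets that are clopen in U. -/
/-!
Around a point `x` of a zero-dimensional open set `U`, take a basic set `V`, clopen in `U`,
lying in the interior of a closed neighbourhood of `x` inside `U \ {y}` (regularity). Since its
closure in `X` stays inside `U`, `V` is clopen in `X` as well; it contains `x` but not `y`,
contradicting the connectedness of `X`.
-/

def ZeroDimensional (Y : Type*) [TopologicalSpace Y] : Prop :=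
  ∃ b : Set (Set Y), TopologicalSpace.IsTopologicalBasis b ∧ ∀ s ∈ b, IsClopen s

open Set Topology

section

variable {X : Type*} [TopologicalSpace X]

theorem IsClopen.isClopen_image_val_of_closure_subset {U : Set X} (hU : IsOpen U) {V : Set U}
    (hV : IsClopen V) (hcl : closure (Subtype.val '' V) ⊆ U) :
    IsClopen (Subtype.val '' V) := by
  refine ⟨closure_subset_iff_isClosed.1 fun z hz => ?_, hU.isOpenMap_subtype_val V hV.2⟩
  have hzV : (⟨z, hcl hz⟩ : U) ∈ closure V := by
    rw [IsEmbedding.subtypeVal.closure_eq_preimage_closure_image]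
    exact hz
  exact ⟨_, hV.1.closure_eq ▸ hzV, rfl⟩

theorem exists_isClopen_mem_subset_of_zeroDimensional [RegularSpace X] {U W : Set X}
    (hU : IsOpen U) (hzd : ZeroDimensional U) (hW : IsOpen W) (hWU : W ⊆ U) {x : X}
    (hx : x ∈ W) : ∃ S : Set X, IsClopen S ∧ x ∈ S ∧ S ⊆ W := by
  obtain ⟨b, hb, hb_clopen⟩ := hzd
  obtain ⟨t, ht_nhds, ht_closed, htW⟩ := exists_mem_nhds_isClosed_subset (hW.mem_nhds hx)
  obtain ⟨V, hVb, hxV, hV_int⟩ := hb.exists_subset_of_mem_open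
    (a := ⟨x, hWU hx⟩) (u := Subtype.val ⁻¹' interior t) (mem_interior_iff_mem_nhds.2 ht_nhds)
    (isOpen_interior.preimage continuous_subtype_val)
  have hVt : Subtype.val '' V ⊆ t := by
    rintro _ ⟨v, hv, rfl⟩
    exact interior_subset (hV_int hv)
  have hcl : closure (Subtype.val '' V) ⊆ t := ht_closed.closure_subset_iff.2 hVt
  exact ⟨_, (hb_clopen V hVb).isClopen_image_val_of_closure_subset hU (hcl.trans (htW.trans hWU)),
    ⟨_, hxV, rfl⟩, hVt.trans htW⟩

end

theorem not_zeroDimensional_of_open_subset_of_continuum_general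
    (X : Type*) [TopologicalSpace X] [TopologicalSpace.MetrizableSpace X]
    [ConnectedSpace X] [Nontrivial X]
    (U : Set X) (hU : IsOpen U) (hUne : U.Nonempty) :
    ¬ ZeroDimensional ↥U := by
  intro hzd
  obtain ⟨x, hx⟩ := hUne
  obtain ⟨y, hyx⟩ := exists_ne x
  obtain ⟨S, hS, hxS, hSU⟩ := exists_isClopen_mem_subset_of_zeroDimensional hU hzd
    (hU.sdiff isClosed_singleton) sdiff_subset (x := x) ⟨hx, hyx.symm⟩
  rcases isClopen_iff.1 hS with rfl | rfl
  · exact hxS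
  · exact (hSU (mem_univ y)).2 rfl

/-- No nonempty open subset of a continuum (with at least two points) is
zero-dimensional. -/
theorem not_zeroDimensional_of_open_subset_of_continuum
    (X : Type*) [TopologicalSpace X] [CompactSpace X] [TopologicalSpace.MetrizableSpace X]
    [ConnectedSpace X] [Nontrivial X]
    (U : Set X) (hU : IsOpen U) (hUne : U.Nonempty) :
    ¬ ZeroDimensional ↥U :=
  not_zeroDimensional_of_open_subset_of_continuum_general X U hU hUne
end

section
/- Let X be a metric space, Y ⊆ X a subspace, and let (A,B) and (A*,B*) be pairs of disjoint closed subsets of X such that A is contained in the interior of A* and B is contained in the interior of B*. Suppose U* and V* are disjoint subsets of Y, open in the subspace topology of Y, with Y ∩ A* ⊆ U* and Y ∩ B* ⊆ V*. Then there exist disjoint open subsets U, V of X with A ∪ U* ⊆ U and B ∪ V* ⊆ V; consequently T = X ∖ (U ∪ V) is a partition of X between A and B satisfying T ∩ Y ⊆ Y ∖ (U* ∪ V*). -/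
/-- `L` is a partition of the whole space `X` between `A` and `B`:
`L = X ∖ (U ∪ V)` for some disjoint open `U, V` with `A ⊆ U` and `B ⊆ V`. -/
def IsPartitionBetween {X : Type*} [TopologicalSpace X] (L A B : Set X) : Prop :=
  ∃ U V : Set X, IsOpen U ∧ IsOpen V ∧ Disjoint U V ∧ A ⊆ U ∧ B ⊆ V ∧ L = (U ∪ V)ᶜ

open Metric Set

lemma separatedNhds_of_separated {X : Type*} [MetricSpace X] {s t : Set X}
    (h1 : Disjoint (closure s) t) (h2 : Disjoint s (closure t)) : SeparatedNhds s t := by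
  rcases s.eq_empty_or_nonempty with hs | hs
  · rw [hs]; exact SeparatedNhds.empty_left t
  rcases t.eq_empty_or_nonempty with ht | ht
  · rw [ht]; exact SeparatedNhds.empty_right s
  refine ⟨{x | infDist x s < infDist x t}, {x | infDist x t < infDist x s},
    isOpen_lt (continuous_infDist_pt s) (continuous_infDist_pt t),
    isOpen_lt (continuous_infDist_pt t) (continuous_infDist_pt s), ?_, ?_, ?_⟩
  · intro x hx
    have h0 : infDist x s = 0 := infDist_zero_of_mem hx
    have hnc : x ∉ closure t := fun hc => h2.ne_of_mem hx hc rfl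
    have : 0 < infDist x (closure t) :=
      (isClosed_closure.notMem_iff_infDist_pos ht.closure).1 hnc
    rw [infDist_closure] at this
    simpa [h0] using this
  · intro x hx
    have h0 : infDist x t = 0 := infDist_zero_of_mem hx
    have hnc : x ∉ closure s := fun hc => h1.ne_of_mem hc hx rfl
    have : 0 < infDist x (closure s) :=
      (isClosed_closure.notMem_iff_infDist_pos hs.closure).1 hnc
    rw [infDist_closure] at this
    simpa [h0] using this
  · exact Set.disjoint_left.mpr fun x hx hx' => lt_asymm (α := ℝ) hx hx'


/-- Given disjoint closed pairs `(A, B)` and `(A*, B*)` in a metric space `X`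
with `A ⊆ int A*`, `B ⊆ int B*`, and disjoint relatively open subsets
`U*, V*` of a subspace `Y` separating `Y ∩ A*` from `Y ∩ B*`, one finds
disjoint open `U, V ⊆ X` with `A ∪ U* ⊆ U` and `B ∪ V* ⊆ V`; hence
`T = X ∖ (U ∪ V)` is a partition of `X` between `A` and `B` with
`T ∩ Y ⊆ Y ∖ (U* ∪ V*)`. -/
theorem partition_extension
    {X : Type*} [MetricSpace X] (Y : Set X)
    (A B Astar Bstar : Set X)
    (hA : IsClosed A) (hB : IsClosed B) (hAB : Disjoint A B)
    (hAstar : IsClosed Astar) (hBstar : IsClosed Bstar)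
    (hABstar : Disjoint Astar Bstar)
    (hAint : A ⊆ interior Astar) (hBint : B ⊆ interior Bstar)
    (Ustar Vstar : Set X)
    (hUY : Ustar ⊆ Y) (hVY : Vstar ⊆ Y)
    (hUopen : ∃ O : Set X, IsOpen O ∧ Ustar = Y ∩ O)
    (hVopen : ∃ O : Set X, IsOpen O ∧ Vstar = Y ∩ O)
    (hUV : Disjoint Ustar Vstar)
    (hAU : Y ∩ Astar ⊆ Ustar) (hBV : Y ∩ Bstar ⊆ Vstar) :
    ∃ U V : Set X, IsOpen U ∧ IsOpen V ∧ Disjoint U V ∧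
      A ∪ Ustar ⊆ U ∧ B ∪ Vstar ⊆ V ∧
      IsPartitionBetween ((U ∪ V)ᶜ) A B ∧
      (U ∪ V)ᶜ ∩ Y ⊆ Y \ (Ustar ∪ Vstar) := by
  obtain ⟨OU, hOU, hUeq⟩ := hUopen
  obtain ⟨OV, hOV, hVeq⟩ := hVopen
  have hUsub : Ustar ⊆ OU := by rw [hUeq]; exact inter_subset_right
  have hVsub : Vstar ⊆ OV := by rw [hVeq]; exact inter_subset_right
  -- GA is an open set containing C := A ∪ Ustar, disjoint from Vstar
  set GA := interior Astar ∪ OU with hGA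
  set GB := interior Bstar ∪ OV with hGB
  have hGAopen : IsOpen GA := isOpen_interior.union hOU
  have hGBopen : IsOpen GB := isOpen_interior.union hOV
  have hCGA : A ∪ Ustar ⊆ GA := union_subset_union hAint hUsub
  have hDGB : B ∪ Vstar ⊆ GB := union_subset_union hBint hVsub
  have hGAV : Disjoint GA Vstar := by
    rw [disjoint_left]
    rintro x (hx | hx) hxV
    · exact (disjoint_left.mp hUV) (hAU ⟨hVY hxV, interior_subset hx⟩) hxV
    · exact (disjoint_left.mp hUV) (hUeq ▸ ⟨hVY hxV, hx⟩) hxV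
  have hGBU : Disjoint GB Ustar := by
    rw [disjoint_left]
    rintro x (hx | hx) hxU
    · exact (disjoint_left.mp hUV) hxU (hBV ⟨hUY hxU, interior_subset hx⟩)
    · exact (disjoint_left.mp hUV) hxU (hVeq ▸ ⟨hUY hxU, hx⟩)
  have hGAclV : Disjoint GA (closure Vstar) :=
    hGAV.closure_right hGAopen
  have hGBclU : Disjoint GB (closure Ustar) :=
    hGBU.closure_right hGBopen
  -- C and D are separated
  have hUB : Disjoint Ustar B := disjoint_left.mpr fun x hx hxB =>
    (disjoint_left.mp hUV) hx (hBV ⟨hUY hx, hBstar.closure_subset_iff.mpr interior_subset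
      (subset_closure (hBint hxB))⟩)
  have hVA : Disjoint Vstar A := disjoint_left.mpr fun x hx hxA =>
    (disjoint_left.mp hUV) (hAU ⟨hVY hx, interior_subset (hAint hxA)⟩) hx
  have hCD1 : Disjoint (A ∪ Ustar) (closure (B ∪ Vstar)) := by
    rw [closure_union, hB.closure_eq, disjoint_union_right]
    constructor
    · exact disjoint_union_left.mpr ⟨hAB, hUB⟩
    · exact hGAclV.mono_left hCGA
  have hCD2 : Disjoint (closure (A ∪ Ustar)) (B ∪ Vstar) := by
    rw [closure_union, hA.closure_eq, disjoint_union_left]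
    constructor
    · exact disjoint_union_right.mpr ⟨hAB, hVA.symm⟩
    · exact (hGBclU.mono_left hDGB).symm
  obtain ⟨U, V, hUo, hVo, hCU, hDV, hUVd⟩ := separatedNhds_of_separated hCD2 hCD1
  refine ⟨U, V, hUo, hVo, hUVd, hCU, hDV,
    ⟨U, V, hUo, hVo, hUVd, fun x hx => hCU (Or.inl hx), fun x hx => hDV (Or.inl hx), rfl⟩,
    ?_⟩
  rintro x ⟨hxc, hxY⟩
  refine ⟨hxY, ?_⟩
  rintro (hx | hx)
  · exact hxc (Or.inl (hCU (Or.inr hx)))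
  · exact hxc (Or.inr (hDV (Or.inr hx)))
end

section
/- Let X be a metric space, P ⊆ X a compact subset, and (A_i, B_i)_{i<n} a finite sequence of pairs of disjoint closed subsets of X. Then the sequence (P ∩ A_i, P ∩ B_i)_{i<n} is inessential in P (that is, there exist sets L_i, each a partition of P between P ∩ A_i and P ∩ B_i, with ⋂_{i<n} L_i = ∅) if and only if there exist open sets U_i, V_i ⊆ X for i < n with A_i ⊆ U_i, B_i ⊆ V_i, U_i ∩ V_i = ∅, and P ∩ ⋂_{i<n} (X ∖ (U_i ∪ V_i)) = ∅. -/
open Set Topology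

theorem IsPartitionBetween.preimage {X Y : Type*} [TopologicalSpace X] [TopologicalSpace Y]
    {f : Y → X} (hf : Continuous f) {L A B : Set X} (h : IsPartitionBetween L A B) :
    IsPartitionBetween (f ⁻¹' L) (f ⁻¹' A) (f ⁻¹' B) := by
  obtain ⟨U, V, hU, hV, hUV, hAU, hBV, rfl⟩ := h
  exact ⟨f ⁻¹' U, f ⁻¹' V, hU.preimage hf, hV.preimage hf, hUV.preimage f,
    preimage_mono hAU, preimage_mono hBV, by rw [preimage_compl, preimage_union]⟩

theorem exists_closed_shrinking_of_iUnion_union_eq_univ {Y ι : Type*} [TopologicalSpace Y]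
    [NormalSpace Y] [Finite ι] {U V : ι → Set Y} (hU : ∀ i, IsOpen (U i))
    (hV : ∀ i, IsOpen (V i)) (hUV : ⋃ i, (U i ∪ V i) = univ) :
    ∃ D E : ι → Set Y, (∀ i, IsClosed (D i)) ∧ (∀ i, IsClosed (E i)) ∧
      (∀ i, D i ⊆ U i) ∧ (∀ i, E i ⊆ V i) ∧ ⋃ i, (D i ∪ E i) = univ := by
  obtain ⟨w, hw, hwc, hwu⟩ := exists_iUnion_eq_closed_subset
    (u := fun p : ι × Bool => cond p.2 (U p.1) (V p.1))
    (fun p => by cases p.2 <;> simp [hU, hV]) (fun _ => toFinite _)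
    (by simpa [eq_univ_iff_forall, Bool.exists_bool, or_comm] using hUV)
  refine ⟨fun i => w (i, true), fun i => w (i, false), fun i => hwc _, fun i => hwc _,
    fun i => hwu (i, true), fun i => hwu (i, false), ?_⟩
  simpa [eq_univ_iff_forall, Bool.exists_bool, or_comm] using hw

theorem Topology.IsClosedEmbedding.exists_isOpen_disjoint_union_image {X Y : Type*}
    [TopologicalSpace X] [NormalSpace X] [TopologicalSpace Y] {f : Y → X}
    (hf : IsClosedEmbedding f) {A B : Set X} (hA : IsClosed A) (hB : IsClosed B)
    (hAB : Disjoint A B) {D E : Set Y} (hD : IsClosed D) (hE : IsClosed E)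
    (hDE : Disjoint (f ⁻¹' A ∪ D) (f ⁻¹' B ∪ E)) :
    ∃ U V : Set X, IsOpen U ∧ IsOpen V ∧ A ∪ f '' D ⊆ U ∧ B ∪ f '' E ⊆ V ∧ Disjoint U V := by
  refine normal_separation (hA.union (hf.isClosedMap D hD)) (hB.union (hf.isClosedMap E hE)) ?_
  simp only [disjoint_union_left, disjoint_union_right] at hDE ⊢
  exact ⟨⟨hAB, disjoint_image_left.2 hDE.1.2⟩, disjoint_image_right.2 hDE.2.1,
    (disjoint_image_iff hf.injective).2 hDE.2.2⟩

theorem exists_open_separation_of_partitions {X ι : Type*} [TopologicalSpace X] [NormalSpace X]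
    [Finite ι] {P : Set X} (hP : IsClosed P) {A B : ι → Set X} (hA : ∀ i, IsClosed (A i))
    (hB : ∀ i, IsClosed (B i)) (hAB : ∀ i, Disjoint (A i) (B i)) {L : ι → Set P}
    (hL : ∀ i, IsPartitionBetween (L i) ((↑) ⁻¹' (A i)) ((↑) ⁻¹' (B i)))
    (hL_empty : ⋂ i, L i = ∅) :
    ∃ U V : ι → Set X,
      (∀ i, IsOpen (U i) ∧ IsOpen (V i) ∧ A i ⊆ U i ∧ B i ⊆ V i ∧ Disjoint (U i) (V i)) ∧
      P ∩ ⋂ i, (U i ∪ V i)ᶜ = ∅ := by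
  choose U' V' hU' hV' hUV' hAU' hBV' hL using hL
  have hcover : ⋃ i, (U' i ∪ V' i) = univ := by
    rwa [← compl_empty_iff, compl_iUnion, ← funext hL]
  have hPe := hP.isClosedEmbedding_subtypeVal
  have := hPe.normalSpace
  obtain ⟨D, E, hD, hE, hDU, hEV, hDE⟩ :=
    exists_closed_shrinking_of_iUnion_union_eq_univ hU' hV' hcover
  choose U V hU hV hAU hBV hUV using fun i =>
    hPe.exists_isOpen_disjoint_union_image (hA i) (hB i) (hAB i) (hD i) (hE i)
      ((hUV' i).mono (union_subset (hAU' i) (hDU i)) (union_subset (hBV' i) (hEV i)))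
  refine ⟨U, V, fun i => ⟨hU i, hV i, subset_union_left.trans (hAU i),
    subset_union_left.trans (hBV i), hUV i⟩, eq_empty_of_forall_notMem ?_⟩
  rintro x ⟨hxP, hx⟩
  obtain ⟨i, hxi⟩ := mem_iUnion.1 (hDE ▸ mem_univ (⟨x, hxP⟩ : P))
  refine mem_iInter.1 hx i ?_
  rcases hxi with hxD | hxE
  · exact Or.inl (hAU i (Or.inr ⟨_, hxD, rfl⟩))
  · exact Or.inr (hBV i (Or.inr ⟨_, hxE, rfl⟩))

theorem exists_partitions_of_open_separation {X ι : Type*} [TopologicalSpace X] {P : Set X}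
    {A B U V : ι → Set X}
    (hUV : ∀ i, IsOpen (U i) ∧ IsOpen (V i) ∧ A i ⊆ U i ∧ B i ⊆ V i ∧ Disjoint (U i) (V i))
    (hP : P ∩ ⋂ i, (U i ∪ V i)ᶜ = ∅) :
    ∃ L : ι → Set P, (∀ i, IsPartitionBetween (L i) ((↑) ⁻¹' (A i)) ((↑) ⁻¹' (B i))) ∧
      ⋂ i, L i = ∅ := by
  refine ⟨fun i => (↑) ⁻¹' (U i ∪ V i)ᶜ, fun i => ?_, ?_⟩
  · obtain ⟨hU, hV, hAU, hBV, hUV⟩ := hUV i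
    exact IsPartitionBetween.preimage continuous_subtype_val ⟨U i, V i, hU, hV, hUV, hAU, hBV, rfl⟩
  · rwa [← preimage_iInter, Subtype.preimage_coe_eq_empty]

/-- For a compact `P ⊆ X` and pairs `(Aᵢ, Bᵢ)` of disjoint closed subsets of
`X`, the sequence `(P ∩ Aᵢ, P ∩ Bᵢ)` is inessential in the subspace `P` iff
there are disjoint open sets `Uᵢ, Vᵢ ⊆ X` with `Aᵢ ⊆ Uᵢ`, `Bᵢ ⊆ Vᵢ`, and
`P ∩ ⋂ᵢ (X ∖ (Uᵢ ∪ Vᵢ)) = ∅`. -/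
theorem inessential_iff_open_separation
    {X : Type*} [MetricSpace X] (P : Set X) (hP : IsCompact P)
    (n : ℕ) (A B : Fin n → Set X)
    (hA : ∀ i, IsClosed (A i)) (hB : ∀ i, IsClosed (B i))
    (hAB : ∀ i, Disjoint (A i) (B i)) :
    (∃ L : Fin n → Set ↥P,
        (∀ i, IsPartitionBetween (L i)
          ((↑) ⁻¹' (A i) : Set ↥P) ((↑) ⁻¹' (B i) : Set ↥P)) ∧
        (⋂ i, L i) = ∅) ↔
    (∃ U V : Fin n → Set X,
        (∀ i, IsOpen (U i) ∧ IsOpen (V i) ∧ A i ⊆ U i ∧ B i ⊆ V i ∧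
          Disjoint (U i) (V i)) ∧
        P ∩ ⋂ i, (U i ∪ V i)ᶜ = ∅) :=
  ⟨fun ⟨_, hL, hL_empty⟩ => exists_open_separation_of_partitions hP.isClosed hA hB hAB hL hL_empty,
    fun ⟨_, _, hUV, hP_empty⟩ => exists_partitions_of_open_separation hUV hP_empty⟩
end
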